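/- With t_{x,y} as above (the N-fold coproduct action of gl_{k,m} generators on (ℂ^n)^{⊗N}), the relation [t_{x,y}, t_{z,x}] = t_{z,y} · H_x holds for all distinct x, y, z ∈ [n], where H_x = (d_x)^{⊗N} and d_x = id − 2e_{x,x} if x > k, d_x = id if x ≤ k. -/

import Mathlib

open Matrix BigOperators

noncomputable section

def E (n : ℕ) (x y : Fin n) : Matrix (Fin n) (Fin n) ℂ := Matrix.single x y 1

def dsmall (n k : ℕ) (z : Fin n) : Matrix (Fin n) (Fin n) ℂ :=
  if (z : ℕ) < k then 1 else 1 - (2 : ℂ) • E n z z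

def kronN (n N : ℕ) (A : Fin N → Matrix (Fin n) (Fin n) ℂ) :
    Matrix (Fin N → Fin n) (Fin N → Fin n) ℂ :=
  Matrix.of fun f g => ∏ i : Fin N, A i (f i) (g i)

/-- `t_{x,y} = ∑_{j=1}^N (d_y)^{⊗(j−1)} ⊗ e_{y,x} ⊗ (d_x)^{⊗(N−j)}`. -/
def tOp (n k N : ℕ) (x y : Fin n) : Matrix (Fin N → Fin n) (Fin N → Fin n) ℂ :=
  ∑ j : Fin N, kronN n N (fun i =>
    if i < j then dsmall n k y else if i = j then E n y x else dsmall n k x)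

/-- `H_x = (d_x)^{⊗N}`. -/
def Hx (n k N : ℕ) (x : Fin n) : Matrix (Fin N → Fin n) (Fin N → Fin n) ℂ :=
  kronN n N (fun _ => dsmall n k x)


/-! Write `t_{x,y} = ∑ⱼ T_j(x,y)`, where `T_j(x,y)` carries `e_{y,x}` in tensor slot `j`.
Kronecker products multiply slotwise, and every `d_w` is diagonal, so the `d`'s commute and
`e_{a,b} d_w = (d_w)_{b,b} e_{a,b}`, `d_w e_{a,b} = (d_w)_{a,a} e_{a,b}`. For `j ≠ l`,
`T_j(x,y)` and `T_l(z,x)` therefore commute slotwise up to scalars whose product is `1`: both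
scalars are `1` when `e_{x,z}` comes first, and both are `(d_x)_{x,x} = ±1` otherwise. Only the
diagonal terms survive, where `e_{x,z} e_{y,x} = 0` and `e_{y,x} e_{x,z} = e_{y,z} = e_{y,z} d_x`. -/

lemma Finset.sum_mul_sum_sub_sum_mul_sum_of_commute {ι R : Type*} [Ring R] (s : Finset ι)
    (P Q : ι → R) (h : ∀ i ∈ s, ∀ j ∈ s, i ≠ j → Commute (P i) (Q j)) :
    (∑ i ∈ s, P i) * (∑ j ∈ s, Q j) - (∑ j ∈ s, Q j) * (∑ i ∈ s, P i)
      = ∑ i ∈ s, (P i * Q i - Q i * P i) := by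
  rw [Finset.sum_mul_sum, Finset.sum_mul_sum, Finset.sum_comm (f := fun j i => Q j * P i),
    ← Finset.sum_sub_distrib]
  refine Finset.sum_congr rfl fun i hi => ?_
  rw [← Finset.sum_sub_distrib, Finset.sum_eq_single_of_mem i hi]
  intro j hj hji
  rw [(h i hi j hj hji.symm).eq, sub_self]

namespace Matrix

variable {ι α : Type*} [Fintype ι] [DecidableEq ι] [Semiring α]

lemma single_mul_diagonal (a b : ι) (c : α) (d : ι → α) :
    single a b c * diagonal d = single a b (c * d b) := by
  ext i j
  rw [mul_diagonal]
  by_cases hi : a = i <;> by_cases hj : b = j <;> simp [hi, hj]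

lemma diagonal_mul_single (a b : ι) (c : α) (d : ι → α) :
    diagonal d * single a b c = single a b (d a * c) := by
  ext i j
  rw [diagonal_mul]
  by_cases hi : a = i <;> by_cases hj : b = j <;> simp [hi, hj]

end Matrix

def slot {α : Type*} {N : ℕ} (j : Fin N) (a b c : α) : Fin N → α :=
  fun i => if i < j then a else if i = j then b else c

section slot

variable {α : Type*} {N : ℕ} (j : Fin N)

lemma slot_self (a : α) : slot j a a a = fun _ => a := by
  funext i
  simp only [slot, ite_self]

lemma slot_mul_slot [Mul α] (a b c a' b' c' : α) :
    slot j a b c * slot j a' b' c' = slot j (a * a') (b * b') (c * c') := by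
  funext i
  simp only [slot, Pi.mul_apply]
  split_ifs <;> rfl

end slot

section kron

variable {n N : ℕ}

lemma kronN_mul (A B : Fin N → Matrix (Fin n) (Fin n) ℂ) :
    kronN n N A * kronN n N B = kronN n N (A * B) := by
  ext f g
  simp only [kronN, mul_apply, of_apply, Pi.mul_apply]
  rw [Fintype.prod_sum (fun i m => A i (f i) m * B i m (g i))]
  exact Finset.sum_congr rfl fun h _ => Finset.prod_mul_distrib.symm

lemma kronN_smul (c : Fin N → ℂ) (A : Fin N → Matrix (Fin n) (Fin n) ℂ) :
    kronN n N (c • A) = (∏ i, c i) • kronN n N A := by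
  ext f g
  simp only [kronN, of_apply, Matrix.smul_apply, Pi.smul_apply', smul_eq_mul,
    Finset.prod_mul_distrib]

lemma kronN_eq_zero {A : Fin N → Matrix (Fin n) (Fin n) ℂ} {j : Fin N} (h : A j = 0) :
    kronN n N A = 0 := by
  ext f g
  exact Finset.prod_eq_zero (Finset.mem_univ j) (by simp [h])

lemma commute_kronN {A B : Fin N → Matrix (Fin n) (Fin n) ℂ} (c : Fin N → ℂ)
    (hc : ∏ i, c i = 1) (hAB : A * B = c • (B * A)) : Commute (kronN n N A) (kronN n N B) := by
  rw [commute_iff_eq, kronN_mul, kronN_mul, hAB, kronN_smul, hc, one_smul]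

lemma commute_kronN_slot_of_lt {j l : Fin N} (hjl : j < l)
    {a b c a' b' c' : Matrix (Fin n) (Fin n) ℂ} {s t : ℂ} (hst : s * t = 1)
    (haa : Commute a a') (hca : Commute c a') (hcc : Commute c c')
    (hba : b * a' = s • (a' * b)) (hcb : c * b' = t • (b' * c)) :
    Commute (kronN n N (slot j a b c)) (kronN n N (slot l a' b' c')) := by
  refine commute_kronN (Pi.mulSingle j s * Pi.mulSingle l t) ?_ ?_
  · simp [Finset.prod_mul_distrib, hst]
  funext i
  simp only [slot, Pi.mul_apply, Pi.smul_apply', Pi.mulSingle_apply]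
  rcases lt_trichotomy i j with hij | rfl | hij
  · simp [hij, hij.trans hjl, hij.ne, (hij.trans hjl).ne, haa.eq]
  · simp [hjl, hjl.ne, hba]
  rcases lt_trichotomy i l with hil | rfl | hil
  · simp [hij.asymm, hij.ne', hil, hil.ne, hca.eq]
  · simp [hij.asymm, hij.ne', hcb]
  · simp [hij.asymm, hij.ne', hil.asymm, hil.ne', hcc.eq]

end kron

section dsmall

variable (n k : ℕ)

lemma dsmall_eq_diagonal (z : Fin n) :
    dsmall n k z = diagonal fun w => if w = z ∧ k ≤ (z : ℕ) then -1 else 1 := by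
  unfold dsmall E
  split_ifs with hk
  · simp [not_le.2 hk]
  ext a b
  by_cases hab : a = b
  · subst hab
    by_cases ha : a = z
    · subst ha
      norm_num [not_lt.1 hk]
    · simp [ha, Ne.symm ha]
  · have : ¬(z = a ∧ z = b) := fun h => hab (h.1.symm.trans h.2)
    simp [hab, this]

lemma commute_dsmall (a b : Fin n) : Commute (dsmall n k a) (dsmall n k b) := by
  rw [dsmall_eq_diagonal, dsmall_eq_diagonal]
  exact commute_diagonal _ _

lemma dsmall_apply_of_ne {w v : Fin n} (h : v ≠ w) : dsmall n k w v v = 1 := by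
  simp [dsmall_eq_diagonal, h]

lemma dsmall_apply_self_mul_self (w : Fin n) : dsmall n k w w w * dsmall n k w w w = 1 := by
  simp only [dsmall_eq_diagonal, diagonal_apply_eq]
  split_ifs <;> norm_num

lemma E_mul_dsmall (a b w : Fin n) : E n a b * dsmall n k w = dsmall n k w b b • E n a b := by
  rw [dsmall_eq_diagonal, E, single_mul_diagonal, smul_single, diagonal_apply_eq, smul_eq_mul,
    one_mul, mul_one]

lemma dsmall_mul_E (w a b : Fin n) : dsmall n k w * E n a b = dsmall n k w a a • E n a b := by
  rw [dsmall_eq_diagonal, E, diagonal_mul_single, smul_single, diagonal_apply_eq, smul_eq_mul]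

end dsmall

lemma E_mul_E (n : ℕ) (a b c : Fin n) : E n a b * E n b c = E n a c := by
  simp [E]

lemma E_mul_E_of_ne (n : ℕ) (a b c d : Fin n) (h : b ≠ c) : E n a b * E n c d = 0 := by
  simp [E, h]

def tTerm (n k N : ℕ) (x y : Fin n) (j : Fin N) : Matrix (Fin N → Fin n) (Fin N → Fin n) ℂ :=
  kronN n N (slot j (dsmall n k y) (E n y x) (dsmall n k x))

section tTerm

variable {n k N : ℕ} {x y z : Fin n}

lemma tOp_eq_sum_tTerm (x y : Fin n) : tOp n k N x y = ∑ j, tTerm n k N x y j := rfl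

lemma commute_tTerm_of_ne (hxy : x ≠ y) (hyz : y ≠ z) (hxz : x ≠ z) {j l : Fin N}
    (hjl : j ≠ l) : Commute (tTerm n k N x y j) (tTerm n k N z x l) := by
  rcases hjl.lt_or_gt with hjl | hlj
  · refine commute_kronN_slot_of_lt hjl (dsmall_apply_self_mul_self n k x)
      (commute_dsmall ..) (commute_dsmall ..) (commute_dsmall ..) ?_ ?_
    · rw [E_mul_dsmall, dsmall_mul_E, dsmall_apply_of_ne n k hxy.symm, one_smul]
    · rw [E_mul_dsmall, dsmall_mul_E, dsmall_apply_of_ne n k hxz.symm, one_smul]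
  · refine (commute_kronN_slot_of_lt hlj (mul_one 1)
      (commute_dsmall ..) (commute_dsmall ..) (commute_dsmall ..) ?_ ?_).symm
    · simp only [E_mul_dsmall, dsmall_mul_E, dsmall_apply_of_ne n k hyz.symm,
        dsmall_apply_of_ne n k hxy, one_smul]
    · simp only [E_mul_dsmall, dsmall_mul_E, dsmall_apply_of_ne n k hyz,
        dsmall_apply_of_ne n k hxz, one_smul]

lemma tTerm_mul_sub_mul_self (hyz : y ≠ z) (hxz : x ≠ z) (j : Fin N) :
    tTerm n k N x y j * tTerm n k N z x j - tTerm n k N z x j * tTerm n k N x y j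
      = tTerm n k N z y j * Hx n k N x := by
  have hzero : tTerm n k N z x j * tTerm n k N x y j = 0 := by
    rw [tTerm, tTerm, kronN_mul]
    exact kronN_eq_zero (j := j) (by simp [slot, E_mul_E_of_ne n x z y x hyz.symm])
  rw [hzero, sub_zero, Hx, ← slot_self j (dsmall n k x), tTerm, tTerm, tTerm, kronN_mul,
    kronN_mul, slot_mul_slot, slot_mul_slot, E_mul_E, E_mul_dsmall,
    dsmall_apply_of_ne n k hxz.symm, one_smul, (commute_dsmall n k x z).eq]

end tTerm

theorem stmt10 (n k N : ℕ) (x y z : Fin n)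
    (hxy : x ≠ y) (hyz : y ≠ z) (hxz : x ≠ z) :
    tOp n k N x y * tOp n k N z x - tOp n k N z x * tOp n k N x y
      = tOp n k N z y * Hx n k N x := by
  rw [tOp_eq_sum_tTerm, tOp_eq_sum_tTerm, tOp_eq_sum_tTerm,
    Finset.sum_mul_sum_sub_sum_mul_sum_of_commute _ _ _
      fun j _ l _ hjl => commute_tTerm_of_ne hxy hyz hxz hjl, Finset.sum_mul]
  exact Finset.sum_congr rfl fun j _ => tTerm_mul_sub_mul_self hyz hxz j
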